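/- Let (X,d) be a T₁ quasi-metric space in which forward convergence implies backward convergence. If every closed discrete subset of (X,d) is uniformly discrete, then (X,d) is a UC space. -/

import Mathlib

open Filter Topology Set

structure IsQuasiMetric {X : Type*} (d : X → X → ℝ) : Prop where
  nonneg : ∀ x y, 0 ≤ d x y
  refl : ∀ x, d x x = 0
  eq_of_both_zero : ∀ x y, d x y = 0 → d y x = 0 → x = y
  triangle : ∀ x y z, d x y ≤ d x z + d z y

/-- The forward topology generated by forward balls `B⁺(x,ε) = {y | d x y < ε}`. -/
def forwardTopology {X : Type*} (d : X → X → ℝ) : TopologicalSpace X :=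
  TopologicalSpace.generateFrom {S | ∃ x : X, ∃ ε : ℝ, 0 < ε ∧ S = {y | d x y < ε}}

/-- `s` forward converges to `x`: `d x (s n) → 0`. -/
def ForwardConv {X : Type*} (d : X → X → ℝ) (s : ℕ → X) (x : X) : Prop :=
  ∀ ε > (0:ℝ), ∃ N : ℕ, ∀ n ≥ N, d x (s n) < ε

/-- `s` backward converges to `x`: `d (s n) x → 0`. -/
def BackwardConv {X : Type*} (d : X → X → ℝ) (s : ℕ → X) (x : X) : Prop :=
  ∀ ε > (0:ℝ), ∃ N : ℕ, ∀ n ≥ N, d (s n) x < ε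

/-- `x` is a cluster point of `s`: some subsequence forward converges to `x`. -/
def IsClusterPointOf {X : Type*} (d : X → X → ℝ) (s : ℕ → X) (x : X) : Prop :=
  ∃ φ : ℕ → ℕ, StrictMono φ ∧ ForwardConv d (s ∘ φ) x

def LeftKCauchy {X : Type*} (d : X → X → ℝ) (s : ℕ → X) : Prop :=
  ∀ ε > (0:ℝ), ∃ n₀ : ℕ, ∀ k n : ℕ, n₀ ≤ k → k ≤ n → d (s k) (s n) < ε

/-- `s` is forward parallel to `t`. -/
def ForwardParallel {X : Type*} (d : X → X → ℝ) (s t : ℕ → X) : Prop :=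
  ∀ ε > (0:ℝ), ∃ N : ℕ, ∀ n ≥ N, d (s n) (t n) < ε

/-- Forward continuity for real-valued functions (ε-δ form). -/
def ForwardContinuous {X : Type*} (d : X → X → ℝ) (f : X → ℝ) : Prop :=
  ∀ x₀ : X, ∀ ε > (0:ℝ), ∃ δ > (0:ℝ), ∀ y, d x₀ y < δ → |f x₀ - f y| < ε

/-- Uniform continuity for real-valued functions. -/
def UniformlyCont {X : Type*} (d : X → X → ℝ) (f : X → ℝ) : Prop :=
  ∀ ε > (0:ℝ), ∃ δ > (0:ℝ), ∀ x y, d x y < δ → |f x - f y| < ε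

/-- `(X,d)` is a UC quasi-metric space. -/
def IsUC {X : Type*} (d : X → X → ℝ) : Prop :=
  ∀ f : X → ℝ, ForwardContinuous d f → UniformlyCont d f

/-- Distance between two sets: `inf {d a b | a ∈ A, b ∈ B}`. -/
noncomputable def setDist {X : Type*} (d : X → X → ℝ) (A B : Set X) : ℝ :=
  sInf {r : ℝ | ∃ a ∈ A, ∃ b ∈ B, d a b = r}

/-! If `f` is forward continuous but not uniformly continuous, there are sequences `u`, `v` with
`d (u n) (v n) → 0` and `|f (u n) - f (v n)| ≥ ε`. Continuity of `f` forbids `u` to have a forward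
cluster point. By T₁, a set meeting some forward ball around each point in finitely many points is
closed and discrete. Hence `v` has no forward cluster point either: if `v ∘ φ → p` forward, it also
converges backward, hence so does `u ∘ φ`, and the uniform discreteness of `{p} ∪ range u` forces
`u ∘ φ` to be eventually equal to `p`, a cluster point after all. So `range u ∪ range v` is closed
and discrete, hence uniformly discrete, and `u n = v n` for large `n`, which is absurd. -/

section

variable {X : Type*} {d : X → X → ℝ}

theorem forwardConv_iff {s : ℕ → X} {x : X} :
    ForwardConv d s x ↔ ∀ ε > 0, ∀ᶠ n in atTop, d x (s n) < ε := by
  simp only [ForwardConv, eventually_atTop]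

theorem backwardConv_iff {s : ℕ → X} {x : X} :
    BackwardConv d s x ↔ ∀ ε > 0, ∀ᶠ n in atTop, d (s n) x < ε := by
  simp only [BackwardConv, eventually_atTop]

theorem forwardParallel_iff {s t : ℕ → X} :
    ForwardParallel d s t ↔ ∀ ε > 0, ∀ᶠ n in atTop, d (s n) (t n) < ε := by
  simp only [ForwardParallel, eventually_atTop]

theorem eventually_lt_of_forall_lt_one_div {a : ℕ → ℝ} (ha : ∀ n, a n < 1 / (n + 1)) :
    ∀ ε > 0, ∀ᶠ n in atTop, a n < ε := fun _ hε =>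
  (tendsto_one_div_add_atTop_nhds_zero_nat.eventually (gt_mem_nhds hε)).mono fun n hn =>
    (ha n).trans hn

theorem ForwardParallel.comp {s t : ℕ → X} (hst : ForwardParallel d s t) {φ : ℕ → ℕ}
    (hφ : StrictMono φ) : ForwardParallel d (s ∘ φ) (t ∘ φ) :=
  forwardParallel_iff.2 fun ε hε => hφ.tendsto_atTop.eventually (forwardParallel_iff.1 hst ε hε)

theorem ForwardConv.of_forwardParallel (htri : ∀ x y z, d x y ≤ d x z + d z y) {s t : ℕ → X}
    {x : X} (hs : ForwardConv d s x) (hst : ForwardParallel d s t) : ForwardConv d t x :=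
  forwardConv_iff.2 fun ε hε =>
    ((forwardConv_iff.1 hs _ (half_pos hε)).and (forwardParallel_iff.1 hst _ (half_pos hε))).mono
      fun n ⟨h₁, h₂⟩ => by linarith [htri x (t n) (s n)]

theorem BackwardConv.of_forwardParallel (htri : ∀ x y z, d x y ≤ d x z + d z y) {s t : ℕ → X}
    {x : X} (ht : BackwardConv d t x) (hst : ForwardParallel d s t) : BackwardConv d s x :=
  backwardConv_iff.2 fun ε hε =>
    ((backwardConv_iff.1 ht _ (half_pos hε)).and (forwardParallel_iff.1 hst _ (half_pos hε))).mono
      fun n ⟨h₁, h₂⟩ => by linarith [htri (s n) x (t n)]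

theorem exists_finite_of_not_isClusterPointOf {s : ℕ → X} {x : X}
    (hs : ¬ IsClusterPointOf d s x) : ∃ ε > 0, {n | d x (s n) < ε}.Finite := by
  by_contra! hinf
  obtain ⟨φ, hφ, hφx⟩ := extraction_forall_of_frequently fun k : ℕ =>
    Nat.frequently_atTop_iff_infinite.2 (hinf (1 / (k + 1)) Nat.one_div_pos_of_nat)
  exact hs ⟨φ, hφ, forwardConv_iff.2 (eventually_lt_of_forall_lt_one_div hφx)⟩

theorem isOpen_forwardBall (x : X) {ε : ℝ} (hε : 0 < ε) :
    IsOpen[forwardTopology d] {y | d x y < ε} :=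
  .basic _ ⟨x, ε, hε, rfl⟩

theorem isClosed_forwardTopology_of_isolated (hrefl : ∀ x, d x x = 0) {A : Set X}
    (hA : ∀ a, ∃ ε > 0, ∀ y ∈ A, d a y < ε → y = a) : IsClosed[forwardTopology d] A := by
  let _ := forwardTopology d
  refine isOpen_compl_iff.1 <| isOpen_iff_forall_mem_open.2 fun x hx => ?_
  obtain ⟨ε, hε, hxA⟩ := hA x
  exact ⟨_, fun y hy hyA => hx (hxA y hyA hy ▸ hyA), isOpen_forwardBall x hε,
    show d x x < ε by rwa [hrefl]⟩

def ForwardLocallyFinite (d : X → X → ℝ) (A : Set X) : Prop :=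
  ∀ x, ∃ ε > 0, {y ∈ A | d x y < ε}.Finite

def UniformlyDiscrete (d : X → X → ℝ) (A : Set X) : Prop :=
  ∃ δ > 0, ∀ x ∈ A, ∀ y ∈ A, x ≠ y → δ ≤ d x y

theorem Set.Finite.forwardLocallyFinite {A : Set X} (hA : A.Finite) : ForwardLocallyFinite d A :=
  fun _ => ⟨1, one_pos, hA.subset (sep_subset _ _)⟩

theorem ForwardLocallyFinite.union {A B : Set X} (hA : ForwardLocallyFinite d A)
    (hB : ForwardLocallyFinite d B) : ForwardLocallyFinite d (A ∪ B) := fun x => by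
  obtain ⟨εA, hεA, hA⟩ := hA x
  obtain ⟨εB, hεB, hB⟩ := hB x
  refine ⟨min εA εB, lt_min hεA hεB, (hA.union hB).subset ?_⟩
  rintro y ⟨hy | hy, hxy⟩
  · exact .inl ⟨hy, hxy.trans_le (min_le_left _ _)⟩
  · exact .inr ⟨hy, hxy.trans_le (min_le_right _ _)⟩

theorem forwardLocallyFinite_range {s : ℕ → X} (hs : ∀ x, ¬ IsClusterPointOf d s x) :
    ForwardLocallyFinite d (range s) := fun x => by
  obtain ⟨ε, hε, hfin⟩ := exists_finite_of_not_isClusterPointOf (hs x)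
  refine ⟨ε, hε, (hfin.image s).subset ?_⟩
  rintro _ ⟨⟨n, rfl⟩, hn⟩
  exact ⟨n, hn, rfl⟩

theorem ForwardLocallyFinite.exists_isolated (hT1 : ∀ x y : X, x ≠ y → 0 < d x y) {A : Set X}
    (hA : ForwardLocallyFinite d A) (x : X) : ∃ ε > 0, ∀ y ∈ A, d x y < ε → y = x := by
  obtain ⟨ε, hε, hfin⟩ := hA x
  have hsmall : ∀ᶠ r in 𝓝 (0 : ℝ), r ≤ ε ∧ ∀ y ∈ {y ∈ A | d x y < ε} \ {x}, r ≤ d x y :=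
    (eventually_le_nhds hε).and <| (eventually_all_finite hfin.sdiff).2 fun y hy =>
      eventually_le_nhds (hT1 x y (Ne.symm hy.2))
  obtain ⟨r, ⟨hrε, hr⟩, hr0⟩ :=
    ((hsmall.filter_mono nhdsWithin_le_nhds).and (eventually_mem_nhdsWithin (s := Ioi 0))).exists
  refine ⟨r, hr0, fun y hy hxy => by_contra fun hne => ?_⟩
  exact (hr y ⟨⟨hy, hxy.trans_le hrε⟩, hne⟩).not_gt hxy

theorem ForwardLocallyFinite.uniformlyDiscrete (hrefl : ∀ x, d x x = 0)
    (hT1 : ∀ x y : X, x ≠ y → 0 < d x y)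
    (h : ∀ A : Set X, IsClosed[forwardTopology d] A →
      (∀ a ∈ A, ∃ ε > 0, ∀ y ∈ A, d a y < ε → y = a) → UniformlyDiscrete d A)
    {A : Set X} (hA : ForwardLocallyFinite d A) : UniformlyDiscrete d A :=
  h A (isClosed_forwardTopology_of_isolated hrefl (hA.exists_isolated hT1))
    fun a _ => hA.exists_isolated hT1 a

theorem exists_forwardParallel_of_not_uniformlyCont {f : X → ℝ} (hf : ¬ UniformlyCont d f) :
    ∃ ε > 0, ∃ u v : ℕ → X, ForwardParallel d u v ∧ ∀ n, ε ≤ |f (u n) - f (v n)| := by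
  unfold UniformlyCont at hf
  push Not at hf
  obtain ⟨ε, hε, hf⟩ := hf
  choose u v huv hfuv using fun n : ℕ => hf (1 / (n + 1)) Nat.one_div_pos_of_nat
  exact ⟨ε, hε, u, v, forwardParallel_iff.2 (eventually_lt_of_forall_lt_one_div huv), hfuv⟩

theorem not_isClusterPointOf_of_forwardContinuous (htri : ∀ x y z, d x y ≤ d x z + d z y)
    {f : X → ℝ} (hf : ForwardContinuous d f) {ε : ℝ} (hε : 0 < ε) {u v : ℕ → X}
    (huv : ForwardParallel d u v) (hfuv : ∀ n, ε ≤ |f (u n) - f (v n)|) (x : X) :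
    ¬ IsClusterPointOf d u x := by
  rintro ⟨φ, hφ, hux⟩
  have hvx := hux.of_forwardParallel htri (huv.comp hφ)
  obtain ⟨δ, hδ, hfx⟩ := hf x (ε / 2) (half_pos hε)
  obtain ⟨n, hun, hvn⟩ :=
    ((forwardConv_iff.1 hux δ hδ).and (forwardConv_iff.1 hvx δ hδ)).exists
  simp only [Function.comp_apply] at hun hvn
  have := abs_sub_le (f (u (φ n))) (f x) (f (v (φ n)))
  rw [abs_sub_comm (f (u (φ n))) (f x)] at this
  linarith [hfuv (φ n), hfx _ hun, hfx _ hvn]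

theorem not_isClusterPointOf_of_forwardParallel (hrefl : ∀ x, d x x = 0)
    (htri : ∀ x y z, d x y ≤ d x z + d z y)
    (hfb : ∀ (s : ℕ → X) (x : X), ForwardConv d s x → BackwardConv d s x)
    (hud : ∀ A, ForwardLocallyFinite d A → UniformlyDiscrete d A) {u v : ℕ → X}
    (hu : ∀ x, ¬ IsClusterPointOf d u x) (huv : ForwardParallel d u v) (p : X) :
    ¬ IsClusterPointOf d v p := by
  rintro ⟨φ, hφ, hvp⟩
  obtain ⟨δ, hδ, hsep⟩ :=
    hud _ ((finite_singleton p).forwardLocallyFinite.union (forwardLocallyFinite_range hu))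
  obtain ⟨N, hN⟩ := (hfb _ _ hvp).of_forwardParallel htri (huv.comp hφ) δ hδ
  have hup : ∀ k ≥ N, u (φ k) = p := fun k hk => by_contra fun hne =>
    (hsep _ (.inr ⟨_, rfl⟩) p (.inl rfl) hne).not_gt (hN k hk)
  refine hu p ⟨φ ∘ (· + N), hφ.comp add_left_strictMono, fun ε hε => ⟨0, fun k _ => ?_⟩⟩
  simpa [hup (k + N) (Nat.le_add_left N k), hrefl] using hε

theorem eventually_eq_of_forwardParallel
    (hud : ∀ A, ForwardLocallyFinite d A → UniformlyDiscrete d A) {u v : ℕ → X}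
    (hu : ∀ x, ¬ IsClusterPointOf d u x) (hv : ∀ x, ¬ IsClusterPointOf d v x)
    (huv : ForwardParallel d u v) : ∀ᶠ n in atTop, u n = v n := by
  obtain ⟨δ, hδ, hsep⟩ :=
    hud _ ((forwardLocallyFinite_range hu).union (forwardLocallyFinite_range hv))
  exact (forwardParallel_iff.1 huv δ hδ).mono fun n hn => by_contra fun hne =>
    (hsep _ (.inl ⟨n, rfl⟩) _ (.inr ⟨n, rfl⟩) hne).not_gt hn

end

/-- if every closed discrete subset is uniformly discrete, then `(X,d)` is UC. -/
theorem isUC_of_uniformly_discrete {X : Type*} (d : X → X → ℝ) (hd : IsQuasiMetric d)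
    (hT1 : ∀ x y : X, x ≠ y → 0 < d x y)
    (hfb : ∀ (s : ℕ → X) (x : X), ForwardConv d s x → BackwardConv d s x)
    (h : ∀ A : Set X, @IsClosed X (forwardTopology d) A →
      (∀ a ∈ A, ∃ ε > (0:ℝ), ∀ y ∈ A, d a y < ε → y = a) →
      ∃ δ > (0:ℝ), ∀ x ∈ A, ∀ y ∈ A, x ≠ y → δ ≤ d x y) :
    IsUC d := by
  intro f hf
  by_contra hfu
  obtain ⟨ε, hε, u, v, huv, hfuv⟩ := exists_forwardParallel_of_not_uniformlyCont hfu
  have hud : ∀ A, ForwardLocallyFinite d A → UniformlyDiscrete d A := fun _ hA =>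
    hA.uniformlyDiscrete hd.refl hT1 h
  have hu := not_isClusterPointOf_of_forwardContinuous hd.triangle hf hε huv hfuv
  have hv := not_isClusterPointOf_of_forwardParallel hd.refl hd.triangle hfb hud hu huv
  obtain ⟨n, hn⟩ := (eventually_eq_of_forwardParallel hud hu hv huv).exists
  have := hfuv n
  rw [hn, sub_self, abs_zero] at this
  exact hε.not_ge this
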